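/- arXiv:2507.19907 — 8 statements merged into one kernel-verified Lean document; each statement's English description precedes it below -/
import Mathlib

section
/- Let V, W, H be real Hilbert spaces, A : V → W and T : V → H bounded linear maps, γ ≥ 0, ρ ∈ ℝ, g ∈ H. Suppose uᵏ, u* ∈ V and λᵏ, λ* ∈ H satisfy: (i) ⟨Auᵏ, Aφ⟩ + γ⟨Tuᵏ − g, Tφ⟩ = ⟨λᵏ, Tφ⟩ for all φ ∈ V; (ii) ⟨Au*, Aφ⟩ + γ⟨Tu* − g, Tφ⟩ = ⟨λ*, Tφ⟩ for all φ ∈ V; (iii) Tu* = g; and define λᵏ⁺¹ := λᵏ − ρ(Tuᵏ − g). Then, writing eᵏ := uᵏ − u*, one has ‖λᵏ⁺¹ − λ*‖² = ‖λᵏ − λ*‖² − 2ρ‖Aeᵏ‖² − ρ(2γ − ρ)‖Teᵏ‖². -/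
open scoped RealInnerProductSpace

/-- One-step descent identity in the proof of Theorem 3.4: combining the residual
identity with the multiplier distance recursion gives
`‖λᵏ⁺¹ − λ*‖² = ‖λᵏ − λ*‖² − 2ρ‖Aeᵏ‖² − ρ(2γ − ρ)‖Teᵏ‖²`, with `eᵏ = uᵏ − u*`. -/
theorem uzawa_one_step_descent_identity
    {V W H : Type*}
    [NormedAddCommGroup V] [InnerProductSpace ℝ V] [CompleteSpace V]
    [NormedAddCommGroup W] [InnerProductSpace ℝ W] [CompleteSpace W]
    [NormedAddCommGroup H] [InnerProductSpace ℝ H] [CompleteSpace H]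
    (A : V →L[ℝ] W) (T : V →L[ℝ] H) (γ ρ : ℝ) (hγ : 0 ≤ γ) (g : H)
    (uk ustar : V) (lamk lamstar : H)
    (hk : ∀ φ : V, ⟪A uk, A φ⟫ + γ * ⟪T uk - g, T φ⟫ = ⟪lamk, T φ⟫)
    (hstar : ∀ φ : V, ⟪A ustar, A φ⟫ + γ * ⟪T ustar - g, T φ⟫ = ⟪lamstar, T φ⟫)
    (htrace : T ustar = g)
    (lamk1 : H) (hupdate : lamk1 = lamk - ρ • (T uk - g)) :
    ‖lamk1 - lamstar‖^2
      = ‖lamk - lamstar‖^2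
        - 2 * ρ * ‖A (uk - ustar)‖^2
        - ρ * (2 * γ - ρ) * ‖T (uk - ustar)‖^2 := by
  set e := uk - ustar with he
  have hTe : T e = T uk - g := by
    rw [he, map_sub, htrace]
  have hAe : A e = A uk - A ustar := by rw [he, map_sub]
  -- key identity
  have key : ‖A e‖^2 + γ * ‖T e‖^2 = ⟪lamk - lamstar, T e⟫ := by
    have h1 := hk e
    have h2 := hstar e
    have h3 : ⟪T ustar - g, T e⟫ = 0 := by
      rw [htrace, sub_self, inner_zero_left]
    rw [h3, mul_zero, add_zero] at h2
    have : ⟪A uk - A ustar, A e⟫ + γ * ⟪T uk - g, T e⟫ = ⟪lamk - lamstar, T e⟫ := by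
      simp only [inner_sub_left] at h1 h2 ⊢
      linarith
    rw [← hAe] at this
    rw [← this, ← hTe, ← real_inner_self_eq_norm_sq, ← real_inner_self_eq_norm_sq]
  have hup : lamk1 - lamstar = (lamk - lamstar) - ρ • T e := by
    rw [hupdate, hTe]; abel
  rw [hup]
  have expand : ‖(lamk - lamstar) - ρ • T e‖^2
      = ‖lamk - lamstar‖^2 - 2 * (ρ * ⟪lamk - lamstar, T e⟫) + ρ^2 * ‖T e‖^2 := by
    rw [norm_sub_sq_real, real_inner_smul_right, norm_smul, mul_pow,
      Real.norm_eq_abs, sq_abs]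
  rw [expand, ← key]
  ring
end

section
/- Let V, W, H be real Hilbert spaces, A : V → W and T : V → H bounded linear maps, γ > 0, 0 < ρ < 2γ, g ∈ H. Let λ* ∈ H and u* ∈ V satisfy Tu* = g and ⟨Au*, Aφ⟩ + γ⟨Tu* − g, Tφ⟩ = ⟨λ*, Tφ⟩ for all φ ∈ V. Let λ⁰ ∈ H and define sequences by: uᵏ satisfies ⟨Auᵏ, Aφ⟩ + γ⟨Tuᵏ − g, Tφ⟩ = ⟨λᵏ, Tφ⟩ for all φ ∈ V, and λᵏ⁺¹ = λᵏ − ρ(Tuᵏ − g). Then, with eᵏ := uᵏ − u*, the series ∑ₖ (2ρ‖Aeᵏ‖² + ρ(2γ − ρ)‖Teᵏ‖²) converges and its sum is at most ‖λ⁰ − λ*‖². -/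
open scoped RealInnerProductSpace

/-- Telescoping summability bound in the proof of Theorem 3.4: for the Uzawa
iteration with `0 < ρ < 2γ`, the series `∑ₖ (2ρ‖Aeᵏ‖² + ρ(2γ − ρ)‖Teᵏ‖²)`
converges with sum at most `‖λ⁰ − λ*‖²`. -/
theorem uzawa_dissipation_summable
    {V W H : Type*}
    [NormedAddCommGroup V] [InnerProductSpace ℝ V] [CompleteSpace V]
    [NormedAddCommGroup W] [InnerProductSpace ℝ W] [CompleteSpace W]
    [NormedAddCommGroup H] [InnerProductSpace ℝ H] [CompleteSpace H]
    (A : V →L[ℝ] W) (T : V →L[ℝ] H) (γ ρ : ℝ) (hγ : 0 < γ)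
    (hρ : 0 < ρ) (hρ2 : ρ < 2 * γ) (g : H)
    (ustar : V) (lamstar : H) (htrace : T ustar = g)
    (hstar : ∀ φ : V, ⟪A ustar, A φ⟫ + γ * ⟪T ustar - g, T φ⟫ = ⟪lamstar, T φ⟫)
    (u : ℕ → V) (lam : ℕ → H)
    (hEL : ∀ k, ∀ φ : V, ⟪A (u k), A φ⟫ + γ * ⟪T (u k) - g, T φ⟫ = ⟪lam k, T φ⟫)
    (hupdate : ∀ k, lam (k + 1) = lam k - ρ • (T (u k) - g)) :
    Summable (fun k : ℕ =>
        2 * ρ * ‖A (u k - ustar)‖^2 + ρ * (2 * γ - ρ) * ‖T (u k - ustar)‖^2)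
    ∧ (∑' k : ℕ,
        (2 * ρ * ‖A (u k - ustar)‖^2 + ρ * (2 * γ - ρ) * ‖T (u k - ustar)‖^2))
      ≤ ‖lam 0 - lamstar‖^2 := by

  set f : ℕ → ℝ := fun k =>
    2 * ρ * ‖A (u k - ustar)‖^2 + ρ * (2 * γ - ρ) * ‖T (u k - ustar)‖^2 with hf
  -- inner product identity
  have hinner : ∀ k, ⟪lam k - lamstar, T (u k - ustar)⟫
      = ‖A (u k - ustar)‖^2 + γ * ‖T (u k - ustar)‖^2 := by
    intro k
    have h1 := hEL k (u k - ustar)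
    have h2 := hstar (u k - ustar)
    have hA : A (u k - ustar) = A (u k) - A ustar := map_sub A _ _
    have hT : T (u k - ustar) = T (u k) - T ustar := map_sub T _ _
    have key : ⟪A (u k) - A ustar, A (u k - ustar)⟫
        + γ * ⟪T (u k) - T ustar, T (u k - ustar)⟫
        = ⟪lam k - lamstar, T (u k - ustar)⟫ := by
      rw [inner_sub_left, inner_sub_left, inner_sub_left]
      have : (T (u k) - g) - (T ustar - g) = T (u k) - T ustar := by abel
      nlinarith [h1, h2, inner_sub_left (𝕜 := ℝ) (T (u k)) g (T (u k - ustar)),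
        inner_sub_left (𝕜 := ℝ) (T ustar) g (T (u k - ustar))]
    rw [← hA, ← hT] at key
    rw [← key, real_inner_self_eq_norm_sq, real_inner_self_eq_norm_sq]
  -- telescoping identity
  have htel : ∀ k, f k = ‖lam k - lamstar‖^2 - ‖lam (k+1) - lamstar‖^2 := by
    intro k
    have hTe : T (u k) - g = T (u k - ustar) := by
      rw [map_sub, htrace]
    have hμ : lam (k+1) - lamstar = (lam k - lamstar) - ρ • T (u k - ustar) := by
      rw [hupdate k, hTe]; abel
    have hexp := norm_sub_sq_real (lam k - lamstar) (ρ • T (u k - ustar))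
    rw [inner_smul_right, hinner k, norm_smul, Real.norm_eq_abs,
      abs_of_pos hρ, mul_pow] at hexp
    rw [hμ, hexp, hf]
    ring
  have hnonneg : ∀ k, 0 ≤ f k := by
    intro k
    have h1 : 0 ≤ ρ * (2 * γ - ρ) := by nlinarith
    show 0 ≤ 2 * ρ * ‖A (u k - ustar)‖^2 + ρ * (2 * γ - ρ) * ‖T (u k - ustar)‖^2
    have := sq_nonneg ‖A (u k - ustar)‖
    have := sq_nonneg ‖T (u k - ustar)‖
    nlinarith
  have hsum : ∀ n, ∑ i ∈ Finset.range n, f i ≤ ‖lam 0 - lamstar‖^2 := by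
    intro n
    have := Finset.sum_range_sub' (fun k => ‖lam k - lamstar‖^2) n
    calc ∑ i ∈ Finset.range n, f i
        = ‖lam 0 - lamstar‖^2 - ‖lam n - lamstar‖^2 := by
          rw [← this]; exact Finset.sum_congr rfl fun i _ => htel i
      _ ≤ ‖lam 0 - lamstar‖^2 := by nlinarith [sq_nonneg ‖lam n - lamstar‖]
  exact ⟨summable_of_sum_range_le hnonneg hsum,
    Real.tsum_le_of_sum_range_le hnonneg hsum⟩
end

section
/- Let V, W, H be real Hilbert spaces, A : V → W and T : V → H bounded linear maps, γ > 0, 0 < ρ < 2γ, g ∈ H. Let λ* ∈ H and u* ∈ V satisfy Tu* = g and ⟨Au*, Aφ⟩ + γ⟨Tu* − g, Tφ⟩ = ⟨λ*, Tφ⟩ for all φ ∈ V. Let λ⁰ ∈ H and define sequences by: uᵏ satisfies ⟨Auᵏ, Aφ⟩ + γ⟨Tuᵏ − g, Tφ⟩ = ⟨λᵏ, Tφ⟩ for all φ ∈ V, and λᵏ⁺¹ = λᵏ − ρ(Tuᵏ − g). Then ‖A(uᵏ − u*)‖_W → 0 and ‖T(uᵏ − u*)‖_H → 0 as k → ∞;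 equivalently, ‖uᵏ − u*‖_V² := ‖A(uᵏ − u*)‖² + ‖T(uᵏ − u*)‖² tends to 0. -/
open scoped RealInnerProductSpace

open Filter Topology

/-- Theorem 3.4 (convergence of the Uzawa iteration): for `0 < ρ < 2γ`, the Uzawa
iterates satisfy `‖A(uᵏ − u*)‖ → 0` and `‖T(uᵏ − u*)‖ → 0`, i.e. the graph-norm
error `‖uᵏ − u*‖_V² = ‖A(uᵏ − u*)‖² + ‖T(uᵏ − u*)‖²` tends to `0`. -/
theorem uzawa_convergence_graph_norm
    {V W H : Type*}
    [NormedAddCommGroup V] [InnerProductSpace ℝ V] [CompleteSpace V]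
    [NormedAddCommGroup W] [InnerProductSpace ℝ W] [CompleteSpace W]
    [NormedAddCommGroup H] [InnerProductSpace ℝ H] [CompleteSpace H]
    (A : V →L[ℝ] W) (T : V →L[ℝ] H) (γ ρ : ℝ) (hγ : 0 < γ)
    (hρ : 0 < ρ) (hρ2 : ρ < 2 * γ) (g : H)
    (ustar : V) (lamstar : H) (htrace : T ustar = g)
    (hstar : ∀ φ : V, ⟪A ustar, A φ⟫ + γ * ⟪T ustar - g, T φ⟫ = ⟪lamstar, T φ⟫)
    (u : ℕ → V) (lam : ℕ → H)
    (hEL : ∀ k, ∀ φ : V, ⟪A (u k), A φ⟫ + γ * ⟪T (u k) - g, T φ⟫ = ⟪lam k, T φ⟫)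
    (hupdate : ∀ k, lam (k + 1) = lam k - ρ • (T (u k) - g)) :
    Tendsto (fun k : ℕ => ‖A (u k - ustar)‖) atTop (𝓝 0)
    ∧ Tendsto (fun k : ℕ => ‖T (u k - ustar)‖) atTop (𝓝 0)
    ∧ Tendsto (fun k : ℕ => ‖A (u k - ustar)‖^2 + ‖T (u k - ustar)‖^2)
        atTop (𝓝 0) := by
  set e : ℕ → V := fun k => u k - ustar with he
  set μ : ℕ → H := fun k => lam k - lamstar with hμ
  -- error equation at φ = e k
  have key : ∀ k, ‖A (e k)‖^2 + γ * ‖T (e k)‖^2 = ⟪μ k, T (e k)⟫ := by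
    intro k
    have h1 := hEL k (e k)
    have h2 := hstar (e k)
    have hTe : T (u k) - g = T (e k) := by
      simp [he, map_sub, htrace]
    have hTs : T ustar - g = 0 := by simp [htrace]
    have hAe : A (u k) - A ustar = A (e k) := by simp [he, map_sub]
    have := sub_eq_sub_iff_sub_eq_sub.mp (congrArg₂ (· - ·) h1 h2)
    calc ‖A (e k)‖^2 + γ * ‖T (e k)‖^2
        = ⟪A (u k) - A ustar, A (e k)⟫ + γ * ⟪T (u k) - g - (T ustar - g), T (e k)⟫ := by
          rw [hAe, hTs, sub_zero, hTe, real_inner_self_eq_norm_sq, real_inner_self_eq_norm_sq]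
      _ = (⟪A (u k), A (e k)⟫ + γ * ⟪T (u k) - g, T (e k)⟫)
            - (⟪A ustar, A (e k)⟫ + γ * ⟪T ustar - g, T (e k)⟫) := by
          rw [inner_sub_left, inner_sub_left]; ring
      _ = ⟪lam k, T (e k)⟫ - ⟪lamstar, T (e k)⟫ := by rw [h1, h2]
      _ = ⟪μ k, T (e k)⟫ := by rw [hμ, inner_sub_left]
  -- dual update in error form
  have hμup : ∀ k, μ (k + 1) = μ k - ρ • (T (e k)) := by
    intro k
    have : T (u k) - g = T (e k) := by simp [he, map_sub, htrace]
    simp [hμ, hupdate k, this, sub_sub, add_comm]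
  -- decrease of ‖μ‖²
  set S : ℕ → ℝ := fun k => 2 * ρ * ‖A (e k)‖^2 + ρ * (2 * γ - ρ) * ‖T (e k)‖^2 with hS
  have hdec : ∀ k, ‖μ (k+1)‖^2 = ‖μ k‖^2 - S k := by
    intro k
    have hSk : S k = 2 * ρ * ‖A (e k)‖^2 + ρ * (2 * γ - ρ) * ‖T (e k)‖^2 := rfl
    rw [hμup k, norm_sub_sq_real, real_inner_smul_right, ← key k, norm_smul, hSk]
    simp only [Real.norm_eq_abs, abs_of_pos hρ, mul_pow]
    ring
  have hSnonneg : ∀ k, 0 ≤ S k := by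
    intro k
    have h1 : 0 ≤ 2 * ρ * ‖A (e k)‖^2 := by positivity
    have h2 : 0 ≤ ρ * (2 * γ - ρ) * ‖T (e k)‖^2 := by
      apply mul_nonneg (mul_nonneg hρ.le (by linarith)) (sq_nonneg _)
    simpa [hS] using add_nonneg h1 h2
  -- ‖μ k‖² is antitone and bounded below, hence converges; so S k → 0
  have hanti : Antitone (fun k => ‖μ k‖^2) := by
    apply antitone_nat_of_succ_le
    intro k
    rw [hdec k]
    linarith [hSnonneg k]
  have hbdd : BddBelow (Set.range fun k => ‖μ k‖^2) := by
    refine ⟨0, ?_⟩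
    rintro x ⟨k, rfl⟩
    positivity
  obtain ⟨L, hL⟩ : ∃ L, Tendsto (fun k => ‖μ k‖^2) atTop (𝓝 L) :=
    ⟨_, tendsto_atTop_ciInf hanti hbdd⟩
  have hS0 : Tendsto S atTop (𝓝 0) := by
    have h1 : Tendsto (fun k => ‖μ (k+1)‖^2) atTop (𝓝 L) :=
      hL.comp (tendsto_add_atTop_nat 1)
    have := hL.sub h1
    have heq : (fun k => ‖μ k‖^2 - ‖μ (k+1)‖^2) = S := by
      funext k; rw [hdec k]; ring
    rw [heq] at this
    simpa using this
  -- squeeze out each piece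
  have hA2 : Tendsto (fun k => ‖A (e k)‖^2) atTop (𝓝 0) := by
    have hle : ∀ k, ‖A (e k)‖^2 ≤ (2*ρ)⁻¹ * S k := by
      intro k
      have hSk : S k = 2 * ρ * ‖A (e k)‖^2 + ρ * (2 * γ - ρ) * ‖T (e k)‖^2 := rfl
      have h2 : 0 ≤ ρ * (2 * γ - ρ) * ‖T (e k)‖^2 :=
        mul_nonneg (mul_nonneg hρ.le (by linarith)) (sq_nonneg _)
      have h2ρ : (0:ℝ) < 2*ρ := by linarith
      rw [le_inv_mul_iff₀ h2ρ, hSk]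
      nlinarith
    have hSc : Tendsto (fun k => (2*ρ)⁻¹ * S k) atTop (𝓝 0) := by
      simpa using hS0.const_mul (2*ρ)⁻¹
    exact squeeze_zero (fun k => sq_nonneg _) hle hSc
  have hT2 : Tendsto (fun k => ‖T (e k)‖^2) atTop (𝓝 0) := by
    have hc : (0:ℝ) < ρ * (2*γ - ρ) := mul_pos hρ (by linarith)
    have hle : ∀ k, ‖T (e k)‖^2 ≤ (ρ * (2*γ - ρ))⁻¹ * S k := by
      intro k
      have hSk : S k = 2 * ρ * ‖A (e k)‖^2 + ρ * (2 * γ - ρ) * ‖T (e k)‖^2 := rfl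
      rw [le_inv_mul_iff₀ hc, hSk]
      nlinarith [sq_nonneg ‖A (e k)‖]
    have hSc : Tendsto (fun k => (ρ * (2*γ - ρ))⁻¹ * S k) atTop (𝓝 0) := by
      simpa using hS0.const_mul (ρ * (2*γ - ρ))⁻¹
    exact squeeze_zero (fun k => sq_nonneg _) hle hSc
  have hAn : Tendsto (fun k : ℕ => ‖A (u k - ustar)‖) atTop (𝓝 0) := by
    have := hA2.sqrt
    simp only [Real.sqrt_zero] at this
    have heq : (fun k => Real.sqrt (‖A (e k)‖^2)) = fun k => ‖A (u k - ustar)‖ := by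
      funext k; rw [Real.sqrt_sq (norm_nonneg _)]
    rwa [heq] at this
  have hTn : Tendsto (fun k : ℕ => ‖T (u k - ustar)‖) atTop (𝓝 0) := by
    have := hT2.sqrt
    simp only [Real.sqrt_zero] at this
    have heq : (fun k => Real.sqrt (‖T (e k)‖^2)) = fun k => ‖T (u k - ustar)‖ := by
      funext k; rw [Real.sqrt_sq (norm_nonneg _)]
    rwa [heq] at this
  refine ⟨hAn, hTn, ?_⟩
  have h := hA2.add hT2
  simp only [add_zero] at h
  exact h
end

section
/- Let V, W, H be real Hilbert spaces, A : V → W and T : V → H bounded linear maps, γ > 0, 0 < ρ < 2γ, g ∈ H. Suppose uᵏ, u* ∈ V and λᵏ, λ* ∈ H satisfy the Euler–Lagrange equations ⟨Auᵏ, Aφ⟩ + γ⟨Tuᵏ − g, Tφ⟩ = ⟨λᵏ, Tφ⟩ and ⟨Au*, Aφ⟩ + γ⟨Tu* − g, Tφ⟩ = ⟨λ*, Tφ⟩ for all φ ∈ V, together with Tu* = g, and define λᵏ⁺¹ := λᵏ − ρ(Tuᵏ − g). Then ‖λᵏ⁺¹ − λ*‖_H ≤ ‖λᵏ − λ*‖_H,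 with strict inequality unless A(uᵏ − u*) = 0 and T(uᵏ − u*) = 0. -/
open scoped RealInnerProductSpace

/-- Strict monotone decrease of the multiplier error (proof of Theorem 3.4):
`‖λᵏ⁺¹ − λ*‖ ≤ ‖λᵏ − λ*‖`, with strict inequality unless
`A(uᵏ − u*) = 0` and `T(uᵏ − u*) = 0`. -/
theorem uzawa_multiplier_error_strict_decrease
    {V W H : Type*}
    [NormedAddCommGroup V] [InnerProductSpace ℝ V] [CompleteSpace V]
    [NormedAddCommGroup W] [InnerProductSpace ℝ W] [CompleteSpace W]
    [NormedAddCommGroup H] [InnerProductSpace ℝ H] [CompleteSpace H]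
    (A : V →L[ℝ] W) (T : V →L[ℝ] H) (γ ρ : ℝ) (hγ : 0 < γ)
    (hρ : 0 < ρ) (hρ2 : ρ < 2 * γ) (g : H)
    (uk ustar : V) (lamk lamstar : H)
    (hk : ∀ φ : V, ⟪A uk, A φ⟫ + γ * ⟪T uk - g, T φ⟫ = ⟪lamk, T φ⟫)
    (hstar : ∀ φ : V, ⟪A ustar, A φ⟫ + γ * ⟪T ustar - g, T φ⟫ = ⟪lamstar, T φ⟫)
    (htrace : T ustar = g)
    (lamk1 : H) (hupdate : lamk1 = lamk - ρ • (T uk - g)) :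
    ‖lamk1 - lamstar‖ ≤ ‖lamk - lamstar‖
    ∧ (¬ (A (uk - ustar) = 0 ∧ T (uk - ustar) = 0) →
        ‖lamk1 - lamstar‖ < ‖lamk - lamstar‖) := by
  set e := uk - ustar with he
  set μ := lamk - lamstar with hμ
  -- key identity: ⟪A e, A e⟫ + γ⟪T e, T e⟫ = ⟪μ, T e⟫
  have hkey : ‖A e‖ ^ 2 + γ * ‖T e‖ ^ 2 = ⟪μ, T e⟫ := by
    have h1 := hk e
    have h2 := hstar e
    have hTukg : T uk - g = T e := by simp [he, map_sub, htrace]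
    have hTusg : T ustar - g = 0 := by rw [htrace]; simp
    rw [hTukg] at h1
    rw [hTusg, inner_zero_left, mul_zero, add_zero] at h2
    have hA : ‖A e‖ ^ 2 = ⟪A uk, A e⟫ - ⟪A ustar, A e⟫ := by
      rw [← real_inner_self_eq_norm_sq, ← inner_sub_left]
      simp [he, map_sub]
    have hT : ‖T e‖ ^ 2 = ⟪T e, T e⟫ := (real_inner_self_eq_norm_sq _).symm
    have hμe : ⟪μ, T e⟫ = ⟪lamk, T e⟫ - ⟪lamstar, T e⟫ := by
      rw [hμ, inner_sub_left]
    rw [hA, hT, hμe]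
    linarith
  have hnew : lamk1 - lamstar = μ - ρ • T e := by
    rw [hupdate, hμ]
    have : T uk - g = T e := by simp [he, map_sub, htrace]
    rw [this]; abel
  have hsq : ‖lamk1 - lamstar‖ ^ 2
      = ‖μ‖ ^ 2 - (2 * ρ * ‖A e‖ ^ 2 + ρ * (2 * γ - ρ) * ‖T e‖ ^ 2) := by
    rw [hnew, norm_sub_sq_real, real_inner_smul_right, norm_smul,
      Real.norm_eq_abs, abs_of_pos hρ, ← hkey]
    ring
  have h2γ : 0 < 2 * γ - ρ := by linarith
  have hnonneg : 0 ≤ 2 * ρ * ‖A e‖ ^ 2 + ρ * (2 * γ - ρ) * ‖T e‖ ^ 2 := by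
    have t1 : 0 ≤ 2 * ρ * ‖A e‖ ^ 2 := by positivity
    have t2 : 0 ≤ ρ * (2 * γ - ρ) * ‖T e‖ ^ 2 := by positivity
    linarith
  constructor
  · have : ‖lamk1 - lamstar‖ ^ 2 ≤ ‖μ‖ ^ 2 := by rw [hsq]; linarith
    exact (pow_le_pow_iff_left₀ (norm_nonneg _) (norm_nonneg μ) two_ne_zero).mp this
  · intro hne
    have hpos : 0 < 2 * ρ * ‖A e‖ ^ 2 + ρ * (2 * γ - ρ) * ‖T e‖ ^ 2 := by
      rcases not_and_or.mp hne with h | h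
      · have h1 : 0 < 2 * ρ * ‖A e‖ ^ 2 :=
          mul_pos (by linarith) (pow_pos (norm_pos_iff.mpr h) 2)
        have t2 : 0 ≤ ρ * (2 * γ - ρ) * ‖T e‖ ^ 2 := by positivity
        linarith
      · have h1 : 0 < ρ * (2 * γ - ρ) * ‖T e‖ ^ 2 :=
          mul_pos (mul_pos hρ h2γ) (pow_pos (norm_pos_iff.mpr h) 2)
        have t1 : 0 ≤ 2 * ρ * ‖A e‖ ^ 2 := by positivity
        linarith
    have h2 : ‖lamk1 - lamstar‖ ^ 2 < ‖μ‖ ^ 2 := by rw [hsq]; linarith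
    exact lt_of_pow_lt_pow_left₀ 2 (norm_nonneg μ) h2
end

section
/- Let V, Z, W, H₊, H₋ be real Hilbert spaces and let ι : V → Z, G : V → W, T₊ : V → H₊, T₋ : V → H₋ be bounded linear maps. Let σ_A, σ_T > 0 and let 𝒯, 𝒮 : V → Z be bounded linear maps satisfying, for all u ∈ V: ‖𝒯u‖² = ‖Gu‖² + σ_A(‖T₊u‖² − ‖T₋u‖²) + σ_A²‖ιu‖², and ‖𝒮u‖ ≤ 2σ_T‖ιu‖. Then for every α ∈ (0, 1) and every u ∈ V: ‖(𝒯 + 𝒮)u‖² ≥ α(‖Gu‖² + σ_A‖T₊u‖² − σ_A‖T₋u‖²) + (σ_A²α − 4σ_T²/(1 − α))‖ιu‖². -/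
/-!
By the reverse triangle inequality and Young's inequality with weight `1 - α`,
`‖𝒯u + 𝒮u‖² ≥ α‖𝒯u‖² - ‖𝒮u‖²/(1 - α)`; expanding `‖𝒯u‖²` by the integration-by-parts
identity and bounding `‖𝒮u‖` by the scattering bound gives the estimate.
-/

theorem mul_norm_sq_sub_norm_sq_div_le_norm_add_sq {E : Type*} [SeminormedAddCommGroup E]
    (x y : E) {α : ℝ} (hα : α < 1) :
    α * ‖x‖ ^ 2 - ‖y‖ ^ 2 / (1 - α) ≤ ‖x + y‖ ^ 2 := by
  have hα' : 0 < 1 - α := sub_pos.mpr hα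
  have reverse_triangle : (‖x‖ - ‖y‖) ^ 2 ≤ ‖x + y‖ ^ 2 := by
    simpa [sq_abs, norm_neg] using
      pow_le_pow_left₀ (abs_nonneg _) (abs_norm_sub_norm_le x (-y)) 2
  -- `2‖x‖‖y‖ ≤ (1 - α)‖x‖² + ‖y‖²/(1 - α)`, i.e. `0 ≤ ((1 - α)‖x‖ - ‖y‖)² + (1 - α)‖y‖²`
  have peter_paul : α * ‖x‖ ^ 2 - ‖y‖ ^ 2 / (1 - α) ≤ (‖x‖ - ‖y‖) ^ 2 := by
    rw [sub_le_iff_le_add, ← sub_le_iff_le_add', le_div_iff₀ hα']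
    nlinarith [sq_nonneg ((1 - α) * ‖x‖ - ‖y‖), mul_nonneg hα'.le (sq_nonneg ‖y‖)]
  exact peter_paul.trans reverse_triangle

theorem transport_scattering_coercivity_general
    {V Z W Hp Hm : Type*}
    [NormedAddCommGroup V] [InnerProductSpace ℝ V]
    [NormedAddCommGroup Z] [InnerProductSpace ℝ Z]
    [NormedAddCommGroup W] [InnerProductSpace ℝ W]
    [NormedAddCommGroup Hp] [InnerProductSpace ℝ Hp]
    [NormedAddCommGroup Hm] [InnerProductSpace ℝ Hm]
    (ι : V →L[ℝ] Z) (G : V →L[ℝ] W) (Tp : V →L[ℝ] Hp) (Tm : V →L[ℝ] Hm)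
    (σA σT : ℝ)
    (𝒯 𝒮 : V →L[ℝ] Z)
    (hT : ∀ u : V, ‖𝒯 u‖^2
        = ‖G u‖^2 + σA * (‖Tp u‖^2 - ‖Tm u‖^2) + σA^2 * ‖ι u‖^2)
    (hS : ∀ u : V, ‖𝒮 u‖ ≤ 2 * σT * ‖ι u‖)
    (α : ℝ) (hα : α ∈ Set.Ioo (0 : ℝ) 1) (u : V) :
    α * (‖G u‖^2 + σA * ‖Tp u‖^2 - σA * ‖Tm u‖^2)
      + (σA^2 * α - 4 * σT^2 / (1 - α)) * ‖ι u‖^2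
      ≤ ‖𝒯 u + 𝒮 u‖^2 := by
  have hα' : 0 ≤ 1 - α := sub_nonneg.mpr hα.2.le
  have hS_sq : ‖𝒮 u‖ ^ 2 ≤ 4 * σT ^ 2 * ‖ι u‖ ^ 2 := by
    calc ‖𝒮 u‖ ^ 2 ≤ (2 * σT * ‖ι u‖) ^ 2 := pow_le_pow_left₀ (norm_nonneg _) (hS u) 2
      _ = 4 * σT ^ 2 * ‖ι u‖ ^ 2 := by ring
  have scattering_loss : ‖𝒮 u‖ ^ 2 / (1 - α) ≤ 4 * σT ^ 2 / (1 - α) * ‖ι u‖ ^ 2 := by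
    rw [div_mul_eq_mul_div]
    exact div_le_div_of_nonneg_right hS_sq hα'
  have key := mul_norm_sq_sub_norm_sq_div_le_norm_add_sq (𝒯 u) (𝒮 u) hα.2
  rw [hT u] at key
  linarith

/-- Coercivity estimate for the transport-scattering residual (main intermediate
inequality in the proof of Theorem 3.6): under the transport integration-by-parts
identity and the scattering bound, for every `α ∈ (0,1)`,
`‖(𝒯 + 𝒮)u‖² ≥ α(‖Gu‖² + σ_A‖T₊u‖² − σ_A‖T₋u‖²) + (σ_A²α − 4σ_T²/(1 − α))‖ιu‖²`. -/
theorem transport_scattering_coercivity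
    {V Z W Hp Hm : Type*}
    [NormedAddCommGroup V] [InnerProductSpace ℝ V] [CompleteSpace V]
    [NormedAddCommGroup Z] [InnerProductSpace ℝ Z] [CompleteSpace Z]
    [NormedAddCommGroup W] [InnerProductSpace ℝ W] [CompleteSpace W]
    [NormedAddCommGroup Hp] [InnerProductSpace ℝ Hp] [CompleteSpace Hp]
    [NormedAddCommGroup Hm] [InnerProductSpace ℝ Hm] [CompleteSpace Hm]
    (ι : V →L[ℝ] Z) (G : V →L[ℝ] W) (Tp : V →L[ℝ] Hp) (Tm : V →L[ℝ] Hm)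
    (σA σT : ℝ) (hσA : 0 < σA) (hσT : 0 < σT)
    (𝒯 𝒮 : V →L[ℝ] Z)
    (hT : ∀ u : V, ‖𝒯 u‖^2
        = ‖G u‖^2 + σA * (‖Tp u‖^2 - ‖Tm u‖^2) + σA^2 * ‖ι u‖^2)
    (hS : ∀ u : V, ‖𝒮 u‖ ≤ 2 * σT * ‖ι u‖)
    (α : ℝ) (hα : α ∈ Set.Ioo (0 : ℝ) 1) (u : V) :
    α * (‖G u‖^2 + σA * ‖Tp u‖^2 - σA * ‖Tm u‖^2)
      + (σA^2 * α - 4 * σT^2 / (1 - α)) * ‖ι u‖^2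
      ≤ ‖𝒯 u + 𝒮 u‖^2 :=
  transport_scattering_coercivity_general ι G Tp Tm σA σT 𝒯 𝒮 hT hS α hα u
end

section
/- Let V, Z, W, H₊, H₋ be real Hilbert spaces, ι : V → Z, G : V → W, T₊ : V → H₊, T₋ : V → H₋ bounded linear maps, σ_A, σ_T > 0, and 𝒯, 𝒮 : V → Z bounded linear maps such that for all u ∈ V: ‖𝒯u‖² = ‖Gu‖² + σ_A(‖T₊u‖² − ‖T₋u‖²) + σ_A²‖ιu‖² and ‖𝒮u‖ ≤ 2σ_T‖ιu‖. Let γ, ρ > 0 satisfy σ_T < σ_A/4 and 0 < ρ < 2γ − σ_A − √(σ_A² − 16σ_T²). Let g ∈ H₋, let (u*, λ*) satisfy T₋u* = g and ⟨(𝒯+𝒮)u*, (𝒯+𝒮)φ⟩ + γ⟨T₋u* − g, T₋φ⟩ = ⟨λ*, T₋φ⟩ for all φ ∈ V, and let (uᵏ, λᵏ) be defined by ⟨(𝒯+𝒮)uᵏ, (𝒯+𝒮)φ⟩ + γ⟨T₋uᵏ − g, T₋φ⟩ = ⟨λᵏ, T₋φ⟩ for all φ ∈ V and λᵏ⁺¹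 = λᵏ − ρ(T₋uᵏ − g), starting from any λ⁰ ∈ H₋. Then, with eᵏ := uᵏ − u*, the quantity ‖ιeᵏ‖² + ‖Geᵏ‖² + ‖T₊eᵏ‖² + ‖T₋eᵏ‖² tends to 0 as k → ∞. -/
open scoped RealInnerProductSpace

open Filter Topology

set_option maxHeartbeats 1000000

/-- Theorem 3.6 (strong convergence under dominance of absorption): under the
transport identity, the scattering bound, `σ_T < σ_A/4` and
`0 < ρ < 2γ − σ_A − √(σ_A² − 16σ_T²)`, the Uzawa iterates converge in the energy
norm `|||u|||² = ‖ιu‖² + ‖Gu‖² + ‖T₊u‖² + ‖T₋u‖²`. -/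
theorem uzawa_strong_convergence_absorption_dominance
    {V Z W Hp Hm : Type*}
    [NormedAddCommGroup V] [InnerProductSpace ℝ V] [CompleteSpace V]
    [NormedAddCommGroup Z] [InnerProductSpace ℝ Z] [CompleteSpace Z]
    [NormedAddCommGroup W] [InnerProductSpace ℝ W] [CompleteSpace W]
    [NormedAddCommGroup Hp] [InnerProductSpace ℝ Hp] [CompleteSpace Hp]
    [NormedAddCommGroup Hm] [InnerProductSpace ℝ Hm] [CompleteSpace Hm]
    (ι : V →L[ℝ] Z) (G : V →L[ℝ] W) (Tp : V →L[ℝ] Hp) (Tm : V →L[ℝ] Hm)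
    (σA σT : ℝ) (hσA : 0 < σA) (hσT : 0 < σT)
    (𝒯 𝒮 : V →L[ℝ] Z)
    (hT : ∀ u : V, ‖𝒯 u‖^2
        = ‖G u‖^2 + σA * (‖Tp u‖^2 - ‖Tm u‖^2) + σA^2 * ‖ι u‖^2)
    (hS : ∀ u : V, ‖𝒮 u‖ ≤ 2 * σT * ‖ι u‖)
    (γ ρ : ℝ) (hγ : 0 < γ) (hρ : 0 < ρ)
    (hdom : σT < σA / 4)
    (hstep : ρ < 2 * γ - σA - Real.sqrt (σA^2 - 16 * σT^2))
    (g : Hm) (ustar : V) (lamstar : Hm) (htrace : Tm ustar = g)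
    (hstar : ∀ φ : V, ⟪𝒯 ustar + 𝒮 ustar, 𝒯 φ + 𝒮 φ⟫
        + γ * ⟪Tm ustar - g, Tm φ⟫ = ⟪lamstar, Tm φ⟫)
    (u : ℕ → V) (lam : ℕ → Hm)
    (hEL : ∀ k, ∀ φ : V, ⟪𝒯 (u k) + 𝒮 (u k), 𝒯 φ + 𝒮 φ⟫
        + γ * ⟪Tm (u k) - g, Tm φ⟫ = ⟪lam k, Tm φ⟫)
    (hupdate : ∀ k, lam (k + 1) = lam k - ρ • (Tm (u k) - g)) :
    Tendsto (fun k : ℕ =>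
        ‖ι (u k - ustar)‖^2 + ‖G (u k - ustar)‖^2
          + ‖Tp (u k - ustar)‖^2 + ‖Tm (u k - ustar)‖^2)
      atTop (𝓝 0) := by
  have hρ2γ : ρ < 2 * γ := by
    have h0 : 0 ≤ Real.sqrt (σA^2 - 16 * σT^2) := Real.sqrt_nonneg _
    linarith
  have hB : ∀ k, Tm (u k) - g = Tm (u k - ustar) := by
    intro k; rw [map_sub, htrace]
  -- error Euler–Lagrange tested with the error itself
  have hinner : ∀ k, ⟪lam k - lamstar, Tm (u k - ustar)⟫
      = ‖𝒯 (u k - ustar) + 𝒮 (u k - ustar)‖^2 + γ * ‖Tm (u k - ustar)‖^2 := by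
    intro k
    have h2 := hstar (u k - ustar)
    rw [htrace, sub_self] at h2
    simp only [inner_zero_left, mul_zero, add_zero] at h2
    have h1 := hEL k (u k - ustar)
    have hA : 𝒯 (u k - ustar) + 𝒮 (u k - ustar)
        = (𝒯 (u k) + 𝒮 (u k)) - (𝒯 ustar + 𝒮 ustar) := by
      simp only [map_sub]; abel
    have h3 : ⟪𝒯 (u k - ustar) + 𝒮 (u k - ustar), 𝒯 (u k - ustar) + 𝒮 (u k - ustar)⟫
        + γ * ⟪Tm (u k - ustar), Tm (u k - ustar)⟫
        = ⟪lam k - lamstar, Tm (u k - ustar)⟫ := by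
      rw [hA, ← hB k] at h1 h2 ⊢
      simp only [inner_sub_left] at h1 h2 ⊢
      linarith [h1, h2]
    rw [real_inner_self_eq_norm_sq, real_inner_self_eq_norm_sq] at h3
    linarith [h3]
  -- key dual energy identity
  have hkey : ∀ k, ‖lam (k+1) - lamstar‖^2
      = ‖lam k - lamstar‖^2 - 2*ρ*‖𝒯 (u k - ustar) + 𝒮 (u k - ustar)‖^2
        - ρ*(2*γ-ρ)*‖Tm (u k - ustar)‖^2 := by
    intro k
    have hup : lam (k+1) - lamstar = (lam k - lamstar) - ρ • Tm (u k - ustar) := by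
      rw [hupdate k, hB k]; abel
    rw [hup, norm_sub_sq_real, real_inner_smul_right, hinner k, norm_smul,
      Real.norm_eq_abs, mul_pow, sq_abs]
    ring
  set b : ℕ → ℝ := fun k => ‖lam k - lamstar‖^2 with hbdef
  have hSnn : ∀ k, (0:ℝ) ≤ 2*ρ*‖𝒯 (u k - ustar) + 𝒮 (u k - ustar)‖^2 := by
    intro k; positivity
  have hMnn : ∀ k, (0:ℝ) ≤ ρ*(2*γ-ρ)*‖Tm (u k - ustar)‖^2 := by
    intro k
    have : 0 < 2*γ - ρ := by linarith
    positivity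
  have hbant : Antitone b := by
    apply antitone_nat_of_succ_le
    intro k
    have := hkey k
    have h1 := hSnn k
    have h2 := hMnn k
    simp only [hbdef]
    linarith
  have hbdd : BddBelow (Set.range b) := by
    refine ⟨0, ?_⟩
    rintro x ⟨k, rfl⟩
    simp only [hbdef]
    positivity
  have hbconv := tendsto_atTop_ciInf hbant hbdd
  have hbs : Tendsto (fun k => b (k+1)) atTop (𝓝 (⨅ i, b i)) :=
    hbconv.comp (tendsto_add_atTop_nat 1)
  have hdiff : Tendsto (fun k => b k - b (k+1)) atTop (𝓝 0) := by
    have := hbconv.sub hbs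
    simpa using this
  have hdiff' : Tendsto (fun k => 2*ρ*‖𝒯 (u k - ustar) + 𝒮 (u k - ustar)‖^2
      + ρ*(2*γ-ρ)*‖Tm (u k - ustar)‖^2) atTop (𝓝 0) := by
    have heq : (fun k => 2*ρ*‖𝒯 (u k - ustar) + 𝒮 (u k - ustar)‖^2
        + ρ*(2*γ-ρ)*‖Tm (u k - ustar)‖^2) = fun k => b k - b (k+1) := by
      funext k
      have := hkey k
      simp only [hbdef]
      linarith
    rw [heq]; exact hdiff
  have h2ρ : (0:ℝ) < 2*ρ := by linarith
  have hργ : (0:ℝ) < ρ*(2*γ-ρ) := by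
    have : 0 < 2*γ - ρ := by linarith
    positivity
  have hS0 : Tendsto (fun k => ‖𝒯 (u k - ustar) + 𝒮 (u k - ustar)‖^2) atTop (𝓝 0) := by
    apply squeeze_zero (fun k => sq_nonneg _)
      (g := fun k => (2*ρ*‖𝒯 (u k - ustar) + 𝒮 (u k - ustar)‖^2
        + ρ*(2*γ-ρ)*‖Tm (u k - ustar)‖^2) / (2*ρ))
    · intro k
      rw [le_div_iff₀ h2ρ]
      have := hMnn k
      nlinarith [sq_nonneg ‖𝒯 (u k - ustar) + 𝒮 (u k - ustar)‖]
    · have := hdiff'.div_const (2*ρ)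
      simpa using this
  have hM0 : Tendsto (fun k => ‖Tm (u k - ustar)‖^2) atTop (𝓝 0) := by
    apply squeeze_zero (fun k => sq_nonneg _)
      (g := fun k => (2*ρ*‖𝒯 (u k - ustar) + 𝒮 (u k - ustar)‖^2
        + ρ*(2*γ-ρ)*‖Tm (u k - ustar)‖^2) / (ρ*(2*γ-ρ)))
    · intro k
      rw [le_div_iff₀ hργ]
      have := hSnn k
      nlinarith [sq_nonneg ‖Tm (u k - ustar)‖]
    · have := hdiff'.div_const (ρ*(2*γ-ρ))
      simpa using this
  -- coercivity (master inequality)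
  have hmaster : ∀ k, ‖G (u k - ustar)‖^2 + σA*‖Tp (u k - ustar)‖^2
      + (σA^2/2)*‖ι (u k - ustar)‖^2
      ≤ 2*‖𝒯 (u k - ustar) + 𝒮 (u k - ustar)‖^2 + σA*‖Tm (u k - ustar)‖^2 := by
    intro k
    have hTx := hT (u k - ustar)
    have hSx := hS (u k - ustar)
    have htri : ‖𝒯 (u k - ustar)‖
        ≤ ‖𝒯 (u k - ustar) + 𝒮 (u k - ustar)‖ + ‖𝒮 (u k - ustar)‖ := by
      calc ‖𝒯 (u k - ustar)‖
          = ‖(𝒯 (u k - ustar) + 𝒮 (u k - ustar)) - 𝒮 (u k - ustar)‖ := by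
            rw [add_sub_cancel_right]
        _ ≤ _ := norm_sub_le _ _
    have htri2 : ‖𝒯 (u k - ustar)‖
        ≤ ‖𝒯 (u k - ustar) + 𝒮 (u k - ustar)‖ + 2*σT*‖ι (u k - ustar)‖ := by
      linarith
    have hsq : ‖𝒯 (u k - ustar)‖^2
        ≤ (‖𝒯 (u k - ustar) + 𝒮 (u k - ustar)‖ + 2*σT*‖ι (u k - ustar)‖)^2 :=
      pow_le_pow_left₀ (norm_nonneg _) htri2 2
    have h8 : 8*σT^2 ≤ σA^2/2 := by nlinarith
    nlinarith [hTx, hsq,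
      sq_nonneg (‖𝒯 (u k - ustar) + 𝒮 (u k - ustar)‖ - 2*σT*‖ι (u k - ustar)‖),
      sq_nonneg ‖ι (u k - ustar)‖]
  set c : ℝ := min 1 (min σA (σA^2/2)) with hcdef
  have hc : 0 < c := by
    apply lt_min one_pos
    apply lt_min hσA
    positivity
  have hc1 : c ≤ 1 := min_le_left _ _
  have hcA : c ≤ σA := le_trans (min_le_right _ _) (min_le_left _ _)
  have hcB : c ≤ σA^2/2 := le_trans (min_le_right _ _) (min_le_right _ _)
  apply squeeze_zero (g := fun k => (2*‖𝒯 (u k - ustar) + 𝒮 (u k - ustar)‖^2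
      + σA*‖Tm (u k - ustar)‖^2) / c + ‖Tm (u k - ustar)‖^2)
  · intro k; positivity
  · intro k
    have hm := hmaster k
    have h1 : ‖ι (u k - ustar)‖^2 + ‖G (u k - ustar)‖^2 + ‖Tp (u k - ustar)‖^2
        ≤ (2*‖𝒯 (u k - ustar) + 𝒮 (u k - ustar)‖^2 + σA*‖Tm (u k - ustar)‖^2) / c := by
      rw [le_div_iff₀ hc]
      nlinarith [sq_nonneg ‖ι (u k - ustar)‖, sq_nonneg ‖G (u k - ustar)‖,
        sq_nonneg ‖Tp (u k - ustar)‖]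
    linarith
  · have := ((hS0.const_mul 2).add (hM0.const_mul σA)).div_const c |>.add hM0
    simpa using this
end

section
/- Let V be a real normed space, F ⊆ V a set, and L, L_h : V → ℝ. Suppose û ∈ F and μ > 0 satisfy the quadratic growth condition L(v) ≥ L(û) + (μ/2)‖v − û‖² for all v ∈ F. Suppose u_θ ∈ F and δ, ε ≥ 0 satisfy: L_h(u_θ) ≤ L_h(v) + δ for all v ∈ F (i.e. u_θ is a δ-minimizer of L_h over F), |L_h(û) − L(û)| ≤ ε, and |L_h(u_θ) − L(u_θ)| ≤ ε. Then ‖u_θ − û‖ ≤ √((2/μ)(δ + 2ε)). -/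
/-- Quantitative core of Theorem 5.1 (stability of neural iterates under Monte
Carlo sampling): if `û` satisfies quadratic growth for `L` over `F`, `u_θ` is a
`δ`-minimizer of `L_h` over `F`, and `L_h` is `ε`-consistent with `L` at `û` and
`u_θ`, then `‖u_θ − û‖ ≤ √((2/μ)(δ + 2ε))`. -/
theorem neural_iterate_stability
    {V : Type*} [NormedAddCommGroup V] [NormedSpace ℝ V]
    (F : Set V) (L Lh : V → ℝ)
    (uhat : V) (huhat : uhat ∈ F) (μ : ℝ) (hμ : 0 < μ)
    (hgrowth : ∀ v ∈ F, L uhat + (μ / 2) * ‖v - uhat‖^2 ≤ L v)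
    (uθ : V) (huθ : uθ ∈ F) (δ ε : ℝ) (hδ : 0 ≤ δ) (hε : 0 ≤ ε)
    (hmin : ∀ v ∈ F, Lh uθ ≤ Lh v + δ)
    (hcons1 : |Lh uhat - L uhat| ≤ ε)
    (hcons2 : |Lh uθ - L uθ| ≤ ε) :
    ‖uθ - uhat‖ ≤ Real.sqrt ((2 / μ) * (δ + 2 * ε)) := by
  have h1 := hgrowth uθ huθ
  have h2 := hmin uhat huhat
  have hc1 := abs_le.mp hcons1
  have hc2 := abs_le.mp hcons2
  have hsq : (μ / 2) * ‖uθ - uhat‖^2 ≤ δ + 2 * ε := by linarith [hc1.1, hc1.2, hc2.1, hc2.2]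
  have hbound : ‖uθ - uhat‖^2 ≤ (2 / μ) * (δ + 2 * ε) := by
    rw [div_mul_eq_mul_div, le_div_iff₀ hμ]
    nlinarith
  calc ‖uθ - uhat‖ = Real.sqrt (‖uθ - uhat‖^2) := by
        rw [Real.sqrt_sq (norm_nonneg _)]
    _ ≤ Real.sqrt ((2 / μ) * (δ + 2 * ε)) := Real.sqrt_le_sqrt hbound
end

section
/- Let V, W, H be real Hilbert spaces, A : V → W and T : V → H bounded linear maps such that ‖u‖_V² := ‖Au‖²_W + ‖Tu‖²_H defines a norm on V (i.e. Au = 0 and Tu = 0 imply u = 0). Let γ > 0, g ∈ H, and for λ ∈ H let u(λ) ∈ V denote any solution of ⟨Au(λ), Aφ⟩ + γ⟨Tu(λ) − g, Tφ⟩ = ⟨λ, Tφ⟩ for all φ ∈ V. Then for any λ₁, λ₂ ∈ H: ‖A(u(λ₁) − u(λ₂))‖² + γ‖T(u(λ₁) − u(λ₂))‖² = ⟨λ₁ − λ₂, T(u(λ₁) − u(λ₂))⟩, and consequently ‖T(u(λ₁) − u(λ₂))‖_H ≤ (1/γ)‖λ₁ − λ₂‖_H and ‖A(u(λ₁) − u(λ₂))‖_W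 ≤ (1/(2√γ))‖λ₁ − λ₂‖_H; in particular λ ↦ u(λ) is continuous from H to (V, ‖·‖_V). -/
open scoped RealInnerProductSpace

open Filter Topology

/-- Continuity of the primal minimizer map `λ ↦ u(λ)` (used in Lemma 5.5 and
Theorem 5.6): the Euler–Lagrange solutions satisfy the residual identity
`‖A(u(λ₁) − u(λ₂))‖² + γ‖T(u(λ₁) − u(λ₂))‖² = ⟨λ₁ − λ₂, T(u(λ₁) − u(λ₂))⟩`,
whence `‖T(u(λ₁) − u(λ₂))‖ ≤ (1/γ)‖λ₁ − λ₂‖`,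
`‖A(u(λ₁) − u(λ₂))‖ ≤ (1/(2√γ))‖λ₁ − λ₂‖`, and `λ ↦ u(λ)` is continuous from
`H` into `V` equipped with the graph norm `‖u‖_V² = ‖Au‖² + ‖Tu‖²`. -/
theorem minimizer_map_continuity
    {V W H : Type*}
    [NormedAddCommGroup V] [InnerProductSpace ℝ V] [CompleteSpace V]
    [NormedAddCommGroup W] [InnerProductSpace ℝ W] [CompleteSpace W]
    [NormedAddCommGroup H] [InnerProductSpace ℝ H] [CompleteSpace H]
    (A : V →L[ℝ] W) (T : V →L[ℝ] H)
    (hnorm : ∀ u : V, A u = 0 → T u = 0 → u = 0)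
    (γ : ℝ) (hγ : 0 < γ) (g : H)
    (u : H → V)
    (hEL : ∀ lam : H, ∀ φ : V,
      ⟪A (u lam), A φ⟫ + γ * ⟪T (u lam) - g, T φ⟫ = ⟪lam, T φ⟫) :
    (∀ lam₁ lam₂ : H,
        ‖A (u lam₁ - u lam₂)‖^2 + γ * ‖T (u lam₁ - u lam₂)‖^2
          = ⟪lam₁ - lam₂, T (u lam₁ - u lam₂)⟫)
    ∧ (∀ lam₁ lam₂ : H,
        ‖T (u lam₁ - u lam₂)‖ ≤ (1 / γ) * ‖lam₁ - lam₂‖)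
    ∧ (∀ lam₁ lam₂ : H,
        ‖A (u lam₁ - u lam₂)‖ ≤ (1 / (2 * Real.sqrt γ)) * ‖lam₁ - lam₂‖)
    ∧ (∀ lam₀ : H,
        Tendsto (fun lam : H =>
            Real.sqrt (‖A (u lam - u lam₀)‖^2 + ‖T (u lam - u lam₀)‖^2))
          (𝓝 lam₀) (𝓝 0)) := by
  have key : ∀ lam₁ lam₂ : H,
      ‖A (u lam₁ - u lam₂)‖^2 + γ * ‖T (u lam₁ - u lam₂)‖^2
        = ⟪lam₁ - lam₂, T (u lam₁ - u lam₂)⟫ := by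
    intro l1 l2
    set e := u l1 - u l2 with he
    have h1 := hEL l1 e
    have h2 := hEL l2 e
    have hA : ⟪A e, A e⟫ = ⟪A (u l1), A e⟫ - ⟪A (u l2), A e⟫ := by
      rw [he, map_sub, inner_sub_left]
    have hT : ⟪T e, T e⟫ = ⟪T (u l1) - g, T e⟫ - ⟪T (u l2) - g, T e⟫ := by
      rw [← inner_sub_left]; congr 1; rw [he, map_sub]; abel
    have hl : ⟪l1 - l2, T e⟫ = ⟪l1, T e⟫ - ⟪l2, T e⟫ := inner_sub_left _ _ _
    have hc : ⟪A e, A e⟫ + γ * ⟪T e, T e⟫ = ⟪l1 - l2, T e⟫ := by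
      rw [hA, hT, hl]; linear_combination h1 - h2
    rwa [real_inner_self_eq_norm_sq, real_inner_self_eq_norm_sq] at hc
  have hcs : ∀ lam₁ lam₂ : H,
      ⟪lam₁ - lam₂, T (u lam₁ - u lam₂)⟫ ≤ ‖lam₁ - lam₂‖ * ‖T (u lam₁ - u lam₂)‖ :=
    fun l1 l2 => real_inner_le_norm _ _
  have hTbd : ∀ lam₁ lam₂ : H,
      ‖T (u lam₁ - u lam₂)‖ ≤ (1 / γ) * ‖lam₁ - lam₂‖ := by
    intro l1 l2
    have hk := key l1 l2
    have hc := hcs l1 l2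
    have hγt : γ * ‖T (u l1 - u l2)‖ ≤ ‖l1 - l2‖ := by
      nlinarith [sq_nonneg ‖A (u l1 - u l2)‖, norm_nonneg (T (u l1 - u l2)),
        norm_nonneg (l1 - l2), sq_nonneg (γ * ‖T (u l1 - u l2)‖ - ‖l1 - l2‖)]
    calc ‖T (u l1 - u l2)‖ = (1 / γ) * (γ * ‖T (u l1 - u l2)‖) := by
          field_simp
      _ ≤ (1 / γ) * ‖l1 - l2‖ :=
          mul_le_mul_of_nonneg_left hγt (by positivity)
  have hAbd : ∀ lam₁ lam₂ : H,
      ‖A (u lam₁ - u lam₂)‖ ≤ (1 / (2 * Real.sqrt γ)) * ‖lam₁ - lam₂‖ := by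
    intro l1 l2
    have hk := key l1 l2
    have hc := hcs l1 l2
    have hs : Real.sqrt γ ^ 2 = γ := Real.sq_sqrt hγ.le
    have hsp : 0 < Real.sqrt γ := Real.sqrt_pos.mpr hγ
    have hsq : ‖A (u l1 - u l2)‖ ^ 2 ≤ ((1 / (2 * Real.sqrt γ)) * ‖l1 - l2‖) ^ 2 := by
      have hrhs : ((1 / (2 * Real.sqrt γ)) * ‖l1 - l2‖) ^ 2 = ‖l1 - l2‖ ^ 2 / (4 * γ) := by
        rw [mul_pow, div_pow, one_pow, mul_pow, hs]
        ring
      rw [hrhs]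
      have h4 : 4 * γ * ‖A (u l1 - u l2)‖ ^ 2 ≤ ‖l1 - l2‖ ^ 2 := by
        nlinarith [sq_nonneg (2 * γ * ‖T (u l1 - u l2)‖ - ‖l1 - l2‖), hγ,
          norm_nonneg (T (u l1 - u l2))]
      rw [le_div_iff₀ (by positivity)]
      linarith
    have h0 : (0:ℝ) ≤ (1 / (2 * Real.sqrt γ)) * ‖l1 - l2‖ := by positivity
    have := Real.sqrt_le_sqrt hsq
    rwa [Real.sqrt_sq (norm_nonneg _), Real.sqrt_sq h0] at this
  refine ⟨key, hTbd, hAbd, ?_⟩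
  intro lam₀
  have C0 : (0:ℝ) ≤ 1 / (2 * Real.sqrt γ) + 1 / γ := by positivity
  apply squeeze_zero (fun lam => Real.sqrt_nonneg _)
    (g := fun lam => (1 / (2 * Real.sqrt γ) + 1 / γ) * ‖lam - lam₀‖)
  · intro lam
    have h1 : Real.sqrt (‖A (u lam - u lam₀)‖^2 + ‖T (u lam - u lam₀)‖^2)
        ≤ ‖A (u lam - u lam₀)‖ + ‖T (u lam - u lam₀)‖ := by
      have hle : ‖A (u lam - u lam₀)‖^2 + ‖T (u lam - u lam₀)‖^2
          ≤ (‖A (u lam - u lam₀)‖ + ‖T (u lam - u lam₀)‖)^2 := by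
        nlinarith [norm_nonneg (A (u lam - u lam₀)), norm_nonneg (T (u lam - u lam₀))]
      calc Real.sqrt (‖A (u lam - u lam₀)‖^2 + ‖T (u lam - u lam₀)‖^2)
          ≤ Real.sqrt ((‖A (u lam - u lam₀)‖ + ‖T (u lam - u lam₀)‖)^2) :=
            Real.sqrt_le_sqrt hle
        _ = _ := Real.sqrt_sq (by positivity)
    have h2 := hAbd lam lam₀
    have h3 := hTbd lam lam₀
    calc Real.sqrt (‖A (u lam - u lam₀)‖^2 + ‖T (u lam - u lam₀)‖^2)
        ≤ ‖A (u lam - u lam₀)‖ + ‖T (u lam - u lam₀)‖ := h1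
      _ ≤ (1 / (2 * Real.sqrt γ)) * ‖lam - lam₀‖ + (1 / γ) * ‖lam - lam₀‖ :=
          add_le_add h2 h3
      _ = (1 / (2 * Real.sqrt γ) + 1 / γ) * ‖lam - lam₀‖ := by ring
  · have : Tendsto (fun lam : H => ‖lam - lam₀‖) (𝓝 lam₀) (𝓝 0) := by
      have hcont : Continuous fun lam : H => ‖lam - lam₀‖ :=
        (continuous_id.sub continuous_const).norm
      have := hcont.tendsto lam₀
      simpa using this
    have := this.const_mul (1 / (2 * Real.sqrt γ) + 1 / γ)
    simpa using this
end
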